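/- arXiv:2402.08032 — 3 statements merged into one kernel-verified Lean document; each statement's English description precedes it below -/
import Mathlib

section
/- The density of the face-centered cubic packing is π/√18: for the FCC lattice V = {√2·(a,b,c) : a,b,c ∈ ℤ, a+b+c even}, the ratio (volume of unit balls centered at points of V ∩ B(0,r)) / (volume of B(0,r)) tends to π/√18 as r → ∞. -/
open Real Metric MeasureTheory Filter

/-- The face-centered cubic lattice. -/
def FCC : Set (EuclideanSpace ℝ (Fin 3)) :=
  {v | ∃ a b c : ℤ, Even (a + b + c) ∧
    v = fun i => Real.sqrt 2 * ![(a : ℝ), (b : ℝ), (c : ℝ)] i}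

/-! The FCC lattice is the `ℤ`-span of `√2 (1,1,0)`, `√2 (1,0,1)`, `√2 (0,1,1)`, a lattice of
covolume `4√2`. Its nonzero vectors have norm at least `2` (`a² + b² + c² ≥ 2` when `a + b + c` is
even), so the unit balls centred at lattice points are disjoint, and the balls centred in `B(0,r)`
fill `vol B(0,1) / 4√2 = π/√18` times the volume of the corresponding translates of a fundamental
domain. Those translates are disjoint and, the domain being bounded by some `D`, their union lies
between `B(0, r - D)` and `B(0, r + D)`, whose volumes are asymptotic to `vol B(0,r)`. -/

open Module Submodule Pointwise Topology

section AddHaar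

variable {E : Type*} [NormedAddCommGroup E] [NormedSpace ℝ E] [FiniteDimensional ℝ E]
  [MeasurableSpace E] [BorelSpace E] (μ : Measure E) [μ.IsAddHaarMeasure]

theorem tendsto_addHaar_closedBall_add_div_addHaar_closedBall (a : ℝ) :
    Tendsto (fun r : ℝ => μ (closedBall 0 (r + a)) / μ (closedBall 0 r)) atTop (𝓝 1) := by
  have hratio : Tendsto (fun r : ℝ => ((r + a) / r) ^ finrank ℝ E) atTop (𝓝 1) := by
    have h : Tendsto (fun r : ℝ => 1 + a / r) atTop (𝓝 (1 + 0)) :=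
      tendsto_const_nhds.add (tendsto_const_nhds.div_atTop tendsto_id)
    rw [add_zero] at h
    simpa using (h.congr' <| by
      filter_upwards [eventually_gt_atTop 0] with r hr
      field_simp).pow (finrank ℝ E)
  refine (ENNReal.ofReal_one ▸ ENNReal.tendsto_ofReal hratio).congr' ?_
  filter_upwards [eventually_gt_atTop 0, eventually_ge_atTop (-a)] with r hr hra
  have h0 : μ (closedBall (0 : E) 1) ≠ 0 := (measure_closedBall_pos μ 0 one_pos).ne'
  have htop : μ (closedBall (0 : E) 1) ≠ ⊤ := (isCompact_closedBall 0 1).measure_lt_top.ne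
  rw [Measure.addHaar_closedBall' μ 0 (by linarith), Measure.addHaar_closedBall' μ 0 hr.le,
    ENNReal.mul_div_mul_right _ _ h0 htop, div_pow, ENNReal.ofReal_div_of_pos (by positivity)]

end AddHaar

section Translates

variable {G : Type*} [AddGroup G] [MeasurableSpace G] [MeasurableAdd G] (μ : Measure G)
  [μ.IsAddLeftInvariant]

theorem measure_biUnion_vadd_eq_div_mul {T S F : Set G} (hT : T.Countable)
    (hS : MeasurableSet S) (hF : MeasurableSet F)
    (hTS : T.PairwiseDisjoint (· +ᵥ S)) (hTF : T.PairwiseDisjoint (· +ᵥ F))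
    (hF0 : μ F ≠ 0) (hFtop : μ F ≠ ⊤) :
    μ (⋃ v ∈ T, v +ᵥ S) = μ S / μ F * μ (⋃ v ∈ T, v +ᵥ F) := by
  rw [measure_biUnion hT hTS fun v _ => hS.const_vadd v,
    measure_biUnion hT hTF fun v _ => hF.const_vadd v, ← ENNReal.tsum_mul_left]
  refine tsum_congr fun v => ?_
  rw [measure_vadd, measure_vadd, ENNReal.div_mul_cancel hF0 hFtop]

end Translates

namespace ZSpan

variable {E ι : Type*} [NormedAddCommGroup E] [NormedSpace ℝ E] [Fintype ι] (b : Basis ι ℝ E)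

theorem norm_le_of_mem_fundamentalDomain {x : E} (hx : x ∈ fundamentalDomain b) :
    ‖x‖ ≤ ∑ i, ‖b i‖ :=
  fract_eq_self.mpr hx ▸ norm_fract_le b x

theorem pairwiseDisjoint_vadd_fundamentalDomain :
    (span ℤ (Set.range b) : Set E).PairwiseDisjoint (· +ᵥ fundamentalDomain b) := by
  intro v hv w hw hvw
  refine Set.disjoint_left.mpr fun x hxv hxw => hvw ?_
  rw [Set.mem_vadd_set_iff_neg_vadd_mem, vadd_eq_add, ← fract_eq_self] at hxv hxw
  have hfract : ∀ u ∈ span ℤ (Set.range b), fract b (-u + x) = fract b x :=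
    fun u hu => fract_zSpan_add b x (neg_mem hu)
  rw [hfract v hv] at hxv
  rw [hfract w hw] at hxw
  simpa using hxv.symm.trans hxw

theorem biUnion_vadd_fundamentalDomain_subset_closedBall (r : ℝ) :
    ⋃ v ∈ (span ℤ (Set.range b) : Set E) ∩ closedBall 0 r, v +ᵥ fundamentalDomain b ⊆
      closedBall 0 (r + ∑ i, ‖b i‖) := by
  simp only [Set.iUnion_subset_iff, Set.mem_inter_iff, mem_closedBall_zero_iff]
  rintro v ⟨-, hv⟩ _ ⟨y, hy, rfl⟩
  rw [mem_closedBall_zero_iff]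
  exact (norm_add_le v y).trans (add_le_add hv (norm_le_of_mem_fundamentalDomain b hy))

theorem closedBall_subset_biUnion_vadd_fundamentalDomain (r : ℝ) :
    closedBall 0 (r - ∑ i, ‖b i‖) ⊆
      ⋃ v ∈ (span ℤ (Set.range b) : Set E) ∩ closedBall 0 r, v +ᵥ fundamentalDomain b := by
  intro x hx
  rw [mem_closedBall_zero_iff] at hx
  have hfloor : ‖(floor b x : E)‖ ≤ r := by
    have hx' : (floor b x : E) = x - fract b x := by rw [fract_apply, sub_sub_cancel]
    rw [hx']
    linarith [norm_sub_le x (fract b x), norm_fract_le b x]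
  simp only [Set.mem_iUnion, exists_prop]
  refine ⟨floor b x, ⟨(floor b x).2, mem_closedBall_zero_iff.mpr hfloor⟩, ?_⟩
  rw [Set.mem_vadd_set_iff_neg_vadd_mem, vadd_eq_add, neg_add_eq_sub, ← fract_apply]
  exact fract_mem_fundamentalDomain b x

variable [FiniteDimensional ℝ E] [MeasurableSpace E] [BorelSpace E] (μ : Measure E)
  [μ.IsAddHaarMeasure]

theorem tendsto_measure_biUnion_vadd_fundamentalDomain_div_measure_closedBall :
    Tendsto (fun r : ℝ => μ (⋃ v ∈ (span ℤ (Set.range b) : Set E) ∩ closedBall 0 r,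
      v +ᵥ fundamentalDomain b) / μ (closedBall 0 r)) atTop (𝓝 1) :=
  tendsto_of_tendsto_of_tendsto_of_le_of_le
    (by simpa only [← sub_eq_add_neg] using
      tendsto_addHaar_closedBall_add_div_addHaar_closedBall μ (-∑ i, ‖b i‖))
    (tendsto_addHaar_closedBall_add_div_addHaar_closedBall μ (∑ i, ‖b i‖))
    (fun r => ENNReal.div_le_div_right
      (measure_mono (closedBall_subset_biUnion_vadd_fundamentalDomain b r)) _)
    (fun r => ENNReal.div_le_div_right
      (measure_mono (biUnion_vadd_fundamentalDomain_subset_closedBall b r)) _)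

theorem tendsto_measure_biUnion_vadd_div_measure_closedBall {S : Set E}
    (hS : MeasurableSet S) (hdisj : (span ℤ (Set.range b) : Set E).PairwiseDisjoint (· +ᵥ S)) :
    Tendsto (fun r : ℝ => μ (⋃ v ∈ (span ℤ (Set.range b) : Set E) ∩ closedBall 0 r, v +ᵥ S) /
      μ (closedBall 0 r)) atTop (𝓝 (μ S / μ (fundamentalDomain b))) := by
  have hF0 : μ (fundamentalDomain b) ≠ 0 := measure_fundamentalDomain_ne_zero b
  have hFtop : μ (fundamentalDomain b) ≠ ⊤ := (fundamentalDomain_isBounded b).measure_lt_top.ne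
  have hcover := ENNReal.Tendsto.const_mul (a := μ S / μ (fundamentalDomain b))
    (tendsto_measure_biUnion_vadd_fundamentalDomain_div_measure_closedBall b μ)
    (Or.inl one_ne_zero)
  rw [mul_one] at hcover
  refine hcover.congr fun r => ?_
  have hcount : ((span ℤ (Set.range b) : Set E) ∩ closedBall 0 r).Countable :=
    (Set.inter_comm _ _ ▸ setFinite_inter b isBounded_closedBall).countable
  rw [measure_biUnion_vadd_eq_div_mul μ hcount hS (fundamentalDomain_measurableSet b)
    (hdisj.subset Set.inter_subset_left)
    ((pairwiseDisjoint_vadd_fundamentalDomain b).subset Set.inter_subset_left) hF0 hFtop,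
    mul_div_assoc]

end ZSpan

theorem mem_FCC_iff {v : EuclideanSpace ℝ (Fin 3)} :
    v ∈ FCC ↔ ∃ a b c : ℤ, Even (a + b + c) ∧ v = !₂[√2 * a, √2 * b, √2 * c] := by
  simp [FCC, WithLp.ext_iff, funext_iff, Fin.forall_fin_succ]

theorem two_le_sq_add_sq_add_sq_of_even_add {a b c : ℤ} (h : Even (a + b + c))
    (h0 : (a, b, c) ≠ 0) : 2 ≤ a ^ 2 + b ^ 2 + c ^ 2 := by
  have hpos : 1 ≤ a ^ 2 + b ^ 2 + c ^ 2 := by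
    by_contra! hlt
    apply h0
    simp only [Prod.mk_eq_zero]
    refine ⟨?_, ?_, ?_⟩ <;> nlinarith [sq_nonneg a, sq_nonneg b, sq_nonneg c]
  -- `x ^ 2` and `x` have the same parity
  have heven : Even (a ^ 2 + b ^ 2 + c ^ 2) := by
    simpa [Int.even_add, Int.even_pow] using h
  obtain ⟨k, hk⟩ := heven
  omega

theorem two_le_norm_of_mem_FCC {v : EuclideanSpace ℝ (Fin 3)} (hv : v ∈ FCC) (h0 : v ≠ 0) :
    2 ≤ ‖v‖ := by
  obtain ⟨a, b, c, habc, rfl⟩ := mem_FCC_iff.mp hv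
  have h2 : √2 ^ 2 = 2 := Real.sq_sqrt zero_le_two
  have habc0 : (a, b, c) ≠ 0 := by rintro ⟨⟩; simp at h0
  have hsq : (2 : ℝ) ≤ a ^ 2 + b ^ 2 + c ^ 2 := by
    exact_mod_cast two_le_sq_add_sq_add_sq_of_even_add habc habc0
  rw [EuclideanSpace.norm_eq, Real.le_sqrt zero_le_two (by positivity)]
  simp only [norm_eq_abs, sq_abs, Fin.sum_univ_three, Matrix.cons_val_zero, Matrix.cons_val_one,
    Matrix.cons_val, mul_pow, h2]
  linarith

noncomputable def fccVec : Fin 3 → EuclideanSpace ℝ (Fin 3) :=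
  ![!₂[√2, √2, 0], !₂[√2, 0, √2], !₂[0, √2, √2]]

theorem det_fccVec : (EuclideanSpace.basisFun (Fin 3) ℝ).toBasis.det fccVec = -(4 * √2) := by
  have h2 : √2 ^ 2 = 2 := Real.sq_sqrt zero_le_two
  rw [Basis.det_apply, Matrix.det_fin_three]
  simp only [fccVec, Basis.toMatrix_apply, OrthonormalBasis.coe_toBasis_repr_apply,
    EuclideanSpace.basisFun_repr, Matrix.cons_val_zero, Matrix.cons_val_one, Matrix.cons_val]
  linear_combination (-2 * √2) * h2

theorem fccVec_isBasis : LinearIndependent ℝ fccVec ∧ span ℝ (Set.range fccVec) = ⊤ :=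
  (Basis.is_basis_iff_det _).mpr <| by
    rw [det_fccVec]; exact (neg_ne_zero.mpr (by positivity)).isUnit

noncomputable def fccBasis : Basis (Fin 3) ℝ (EuclideanSpace ℝ (Fin 3)) :=
  Basis.mk fccVec_isBasis.1 fccVec_isBasis.2.ge

theorem coe_fccBasis : ⇑fccBasis = fccVec := Basis.coe_mk _ _

theorem sum_smul_fccVec (c : Fin 3 → ℤ) :
    ∑ i, c i • fccVec i = !₂[√2 * (c 0 + c 1), √2 * (c 0 + c 2), √2 * (c 1 + c 2)] := by
  ext i
  fin_cases i <;>
    simp only [fccVec, Fin.sum_univ_three, Fin.isValue, Matrix.cons_val_zero, Matrix.cons_val_one,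
      Matrix.cons_val, Fin.zero_eta, Fin.mk_one, Fin.reduceFinMk, PiLp.add_apply, PiLp.smul_apply,
      zsmul_eq_mul, smul_zero, add_zero, zero_add] <;> ring

theorem FCC_eq_span : FCC = span ℤ (Set.range fccBasis) := by
  ext x
  simp only [mem_FCC_iff, SetLike.mem_coe, coe_fccBasis, mem_span_range_iff_exists_fun,
    sum_smul_fccVec]
  constructor
  · rintro ⟨a, b, c, ⟨k, hk⟩, rfl⟩
    refine ⟨![k - c, k - b, k - a], ?_⟩
    have hk' : (a : ℝ) + b + c = k + k := by exact_mod_cast hk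
    ext i
    fin_cases i <;>
      simp only [Fin.isValue, Matrix.cons_val_zero, Matrix.cons_val_one, Matrix.cons_val,
        Fin.zero_eta, Fin.mk_one, Fin.reduceFinMk, Int.cast_sub] <;>
      linear_combination -√2 * hk'
  · rintro ⟨c, rfl⟩
    refine ⟨c 0 + c 1, c 0 + c 2, c 1 + c 2, ⟨c 0 + c 1 + c 2, by ring⟩, ?_⟩
    ext i
    fin_cases i <;> simp

theorem pairwiseDisjoint_ball_FCC : FCC.PairwiseDisjoint (ball · 1) := by
  intro v hv w hw hvw
  have hsub : v - w ∈ FCC := by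
    rw [FCC_eq_span] at hv hw ⊢
    exact sub_mem hv hw
  refine ball_disjoint_ball ?_
  rw [dist_eq_norm]
  linarith [two_le_norm_of_mem_FCC hsub (sub_ne_zero.mpr hvw)]

theorem volume_fundamentalDomain_fccBasis :
    volume (ZSpan.fundamentalDomain fccBasis) = ENNReal.ofReal (4 * √2) := by
  rw [measure_congr (ZSpan.fundamentalDomain_ae_parallelepiped fccBasis volume),
    ← (EuclideanSpace.basisFun (Fin 3) ℝ).addHaar_eq_volume, Measure.addHaar_parallelepiped,
    coe_fccBasis, det_fccVec, abs_neg, abs_of_pos (by positivity)]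

theorem volume_ball_div_volume_fundamentalDomain_fccBasis :
    volume (ball (0 : EuclideanSpace ℝ (Fin 3)) 1) / volume (ZSpan.fundamentalDomain fccBasis) =
      ENNReal.ofReal (π / √18) := by
  have h18 : √18 = 3 * √2 := by
    rw [show (18 : ℝ) = 3 ^ 2 * 2 by norm_num, sqrt_mul (by positivity), sqrt_sq (by norm_num)]
  rw [EuclideanSpace.volume_ball_fin_three, volume_fundamentalDomain_fccBasis, ENNReal.ofReal_one,
    one_pow, one_mul, ← ENNReal.ofReal_div_of_pos (by positivity), h18]
  congr 1
  field_simp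

theorem fcc_density :
    Tendsto
      (fun r : ℝ =>
        volume (⋃ v ∈ FCC ∩ closedBall 0 r, ball v 1) / volume (closedBall (0 : EuclideanSpace ℝ (Fin 3)) r))
      atTop (nhds (ENNReal.ofReal (π / Real.sqrt 18))) := by
  have hdisj : (span ℤ (Set.range fccBasis) : Set (EuclideanSpace ℝ (Fin 3))).PairwiseDisjoint
      (· +ᵥ ball (0 : EuclideanSpace ℝ (Fin 3)) 1) := by
    simpa only [vadd_ball_zero, ← FCC_eq_span] using pairwiseDisjoint_ball_FCC
  have h := ZSpan.tendsto_measure_biUnion_vadd_div_measure_closedBall fccBasis volume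
    measurableSet_ball hdisj
  simpa only [← FCC_eq_span, vadd_ball_zero,
    volume_ball_div_volume_fundamentalDomain_fccBasis] using h
end

section
/- The volume of a regular dodecahedron circumscribed about a unit sphere (i.e., with inradius 1) is strictly less than the volume of a rhombic dodecahedron circumscribed about a unit sphere, which equals 4√2. -/
/-- The volume of a regular dodecahedron with inradius 1, namely
`10·√(130 − 58·√5)`, is strictly less than the volume `4·√2` of a rhombic
dodecahedron with inradius 1. -/
theorem dodecahedron_volume_lt :
    10 * Real.sqrt (130 - 58 * Real.sqrt 5) < 4 * Real.sqrt 2 := by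
  have h5 : (2.236 : ℝ) < Real.sqrt 5 := by
    have := Real.sq_sqrt (by norm_num : (5:ℝ) ≥ 0)
    nlinarith [Real.sqrt_nonneg 5]
  have h2 : Real.sqrt 2 > 0 := Real.sqrt_pos.mpr (by norm_num)
  have h2sq : Real.sqrt 2 ^ 2 = 2 := Real.sq_sqrt (by norm_num)
  have key : Real.sqrt (130 - 58 * Real.sqrt 5) < 2 * Real.sqrt 2 / 5 := by
    rw [Real.sqrt_lt' (by positivity)]
    nlinarith
  linarith
end

section
/- Second-order Taylor bound used in interval verification: if f : ℝ → ℝ is twice differentiable on [x₀ − h, x₀ + h] with |f''(t)| ≤ M for all t in that interval, and if f(x₀) + |f'(x₀)|·h + M·h²/2 < 0, then f(x) < 0 for all x ∈ [x₀ − h, x₀ + h]. -/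
/-!
Subtracting the tangent line and the parabola `M (t - x₀)² / 2` from `f` leaves a function whose
derivative `f' t - f' x₀ - M (t - x₀)` is nonnegative left of `x₀` and nonpositive right of it,
because `f'` is `M`-Lipschitz by the mean value theorem. That function therefore peaks at `x₀`,
so `f` lies below `f x₀ + f' x₀ (x - x₀) + M (x - x₀)² / 2 ≤ f x₀ + |f' x₀| h + M h² / 2 < 0`.
-/

open Set

theorem Convex.image_le_of_abs_deriv_sub_le {f f' : ℝ → ℝ} {s : Set ℝ} {x₀ x M : ℝ}
    (hs : Convex ℝ s) (hf : ∀ t ∈ s, HasDerivWithinAt f (f' t) s t)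
    (hf' : ∀ t ∈ s, |f' t - f' x₀| ≤ M * |t - x₀|) (hx₀ : x₀ ∈ s) (hx : x ∈ s) :
    f x ≤ f x₀ + f' x₀ * (x - x₀) + M * (x - x₀) ^ 2 / 2 := by
  set g : ℝ → ℝ := fun t => f t - (f' x₀ * (t - x₀) + M * (t - x₀) ^ 2 / 2)
  have hg : ∀ t ∈ s, HasDerivWithinAt g (f' t - f' x₀ - M * (t - x₀)) s t := fun t ht => by
    have h₁ := (hasDerivAt_id t).sub_const x₀
    have hpoly := (h₁.const_mul (f' x₀)).add (((h₁.pow 2).const_mul M).div_const 2)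
    exact ((hf t ht).sub hpoly.hasDerivWithinAt).congr_deriv (by simp only [id]; ring)
  have hgc : ContinuousOn g s := fun t ht => (hg t ht).continuousWithinAt
  have hg_interior {D : Set ℝ} (hD : D ⊆ s) :
      ∀ t ∈ interior D, HasDerivWithinAt g (f' t - f' x₀ - M * (t - x₀)) (interior D) t :=
    fun t ht => (hg t (hD (interior_subset ht))).mono (interior_subset.trans hD)
  have hgx : g x ≤ g x₀ := by
    rcases le_total x x₀ with hle | hle
    · refine monotoneOn_of_hasDerivWithinAt_nonneg (hs.inter (convex_Iic x₀))
        (hgc.mono inter_subset_left) (hg_interior inter_subset_left) (fun t ht => ?_)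
        ⟨hx, hle⟩ ⟨hx₀, self_mem_Iic⟩ hle
      obtain ⟨hts, htx₀ : t ≤ x₀⟩ := interior_subset ht
      have hbound := hf' t hts
      rw [abs_of_nonpos (sub_nonpos.2 htx₀)] at hbound
      linarith [neg_abs_le (f' t - f' x₀)]
    · refine antitoneOn_of_hasDerivWithinAt_nonpos (hs.inter (convex_Ici x₀))
        (hgc.mono inter_subset_left) (hg_interior inter_subset_left) (fun t ht => ?_)
        ⟨hx₀, self_mem_Ici⟩ ⟨hx, hle⟩ hle
      obtain ⟨hts, htx₀ : x₀ ≤ t⟩ := interior_subset ht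
      have hbound := hf' t hts
      rw [abs_of_nonneg (sub_nonneg.2 htx₀)] at hbound
      linarith [le_abs_self (f' t - f' x₀)]
  norm_num [g] at hgx
  linarith

theorem taylor_second_order_bound
    (f f' f'' : ℝ → ℝ) (x₀ h M : ℝ)
    (hd1 : ∀ x ∈ Icc (x₀ - h) (x₀ + h), HasDerivAt f (f' x) x)
    (hd2 : ∀ x ∈ Icc (x₀ - h) (x₀ + h), HasDerivAt f' (f'' x) x)
    (hM : ∀ t ∈ Icc (x₀ - h) (x₀ + h), |f'' t| ≤ M)
    (hneg : f x₀ + |f' x₀| * h + M * h ^ 2 / 2 < 0) :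
    ∀ x ∈ Icc (x₀ - h) (x₀ + h), f x < 0 := by
  intro x hx
  have hx₀ : x₀ ∈ Icc (x₀ - h) (x₀ + h) := ⟨by linarith [hx.1, hx.2], by linarith [hx.1, hx.2]⟩
  have hf'_lip : ∀ t ∈ Icc (x₀ - h) (x₀ + h), |f' t - f' x₀| ≤ M * |t - x₀| := fun t ht =>
    (convex_Icc _ _).norm_image_sub_le_of_norm_hasDerivWithin_le
      (fun y hy => (hd2 y hy).hasDerivWithinAt) hM hx₀ ht
  have htaylor := (convex_Icc _ _).image_le_of_abs_deriv_sub_le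
    (fun y hy => (hd1 y hy).hasDerivWithinAt) hf'_lip hx₀ hx
  have hdist : |x - x₀| ≤ h := abs_sub_le_iff.2 ⟨by linarith [hx.2], by linarith [hx.1]⟩
  have hlinear : f' x₀ * (x - x₀) ≤ |f' x₀| * h :=
    (le_abs_self _).trans (by rw [abs_mul]; gcongr)
  have hquadratic : M * (x - x₀) ^ 2 / 2 ≤ M * h ^ 2 / 2 := by
    have hM₀ : 0 ≤ M := (abs_nonneg _).trans (hM x₀ hx₀)
    have hsq : (x - x₀) ^ 2 ≤ h ^ 2 := sq_le_sq' (abs_le.1 hdist).1 (abs_le.1 hdist).2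
    gcongr
  linarith
end
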